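/- arXiv:1503.01936 — 2 statements merged into one kernel-verified Lean document; each statement's English description precedes it below -/
import Mathlib

section
/- Let 𝒫 be a partition of Ω and let C|D be a conditional event with C ∩ D ≠ ∅ and Cᶜ ∩ D ≠ ∅. Then the outer conditional event (C|D)^* = (C∩D)^* | ((C∩D)^* ∪ (Cᶜ∩D)_*) is a well-defined element of 𝒜_C(𝒫) (its conditioning event is nonempty), it satisfies C|D ≤_GN (C|D)^*, and for every A|B ∈ 𝒜_C(𝒫) with C|D ≤_GN A|B one has (C|D)^* ≤_GN A|B. In other words, the set M(C|D) = {A|B ∈ 𝒜_C(𝒫) : C|D ≤_GN A|B} is nonempty and has (C|D)^* as its minimum with respect to ≤_GN. -/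
open Set

/-- Real-valued indicator function of a set. -/
noncomputable def ind {Ω : Type*} (B : Set Ω) : Ω → ℝ := B.indicator 1

/-- A bounded gamble. -/
def Bdd {Ω : Type*} (X : Ω → ℝ) : Prop := BddAbove (Set.range X) ∧ BddBelow (Set.range X)

/-- `S` is a set of conditional gambles: each pair has nonempty conditioning event and
bounded gamble. -/
def IsCondGambleSet {Ω : Type*} (S : Set ((Ω → ℝ) × Set Ω)) : Prop :=
  ∀ p ∈ S, p.2.Nonempty ∧ Bdd p.1

/-- `S` is a set of conditional events: each member is an indicator gamble conditional on a
nonempty event. -/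
def IsCondEventSet {Ω : Type*} (S : Set ((Ω → ℝ) × Set Ω)) : Prop :=
  ∀ p ∈ S, ∃ A B : Set Ω, B.Nonempty ∧ p = (ind A, B)

/-- The term `1_B · (X − P(X|B))` appearing in betting gains. -/
noncomputable def gainTerm {Ω : Type*} (P : (Ω → ℝ) × Set Ω → ℝ) (X : Ω → ℝ) (B : Set Ω) :
    Ω → ℝ :=
  B.indicator (fun ω => X ω - P (X, B))

/-- Convex conditional lower prevision on `S`. -/
def IsConvexLP {Ω : Type*} (S : Set ((Ω → ℝ) × Set Ω)) (P : (Ω → ℝ) × Set Ω → ℝ) : Prop :=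
  ∀ n : ℕ, 1 ≤ n → ∀ (X0 : Ω → ℝ) (B0 : Set Ω) (X : Fin n → Ω → ℝ) (Bs : Fin n → Set Ω)
    (s0 : ℝ) (s : Fin n → ℝ),
    (X0, B0) ∈ S → (∀ i, (X i, Bs i) ∈ S) → (∀ i, 0 ≤ s i) → (∑ i, s i) = s0 → 0 < s0 →
    0 ≤ sSup ((fun ω => (∑ i, s i * gainTerm P (X i) (Bs i) ω) - s0 * gainTerm P X0 B0 ω)
        '' (B0 ∪ ⋃ i, Bs i))

/-- Centered convex (C-convex) conditional lower prevision on `S`. -/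
def IsCConvexLP {Ω : Type*} (S : Set ((Ω → ℝ) × Set Ω)) (P : (Ω → ℝ) × Set Ω → ℝ) : Prop :=
  IsConvexLP S P ∧
    ∀ (X : Ω → ℝ) (B : Set Ω), (X, B) ∈ S →
      ((fun _ => (0 : ℝ)), B) ∈ S ∧ P ((fun _ => (0 : ℝ)), B) = 0

/-- 1-convex conditional lower prevision on `S`. -/
def Is1ConvexLP {Ω : Type*} (S : Set ((Ω → ℝ) × Set Ω)) (P : (Ω → ℝ) × Set Ω → ℝ) : Prop :=
  ∀ (X0 X1 : Ω → ℝ) (B0 B1 : Set Ω) (t : ℝ),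
    (X0, B0) ∈ S → (X1, B1) ∈ S → 0 < t →
    0 ≤ sSup ((fun ω => t * gainTerm P X1 B1 ω - t * gainTerm P X0 B0 ω) '' (B0 ∪ B1))

/-- Centered 1-convex conditional lower prevision on `S`. -/
def IsC1ConvexLP {Ω : Type*} (S : Set ((Ω → ℝ) × Set Ω)) (P : (Ω → ℝ) × Set Ω → ℝ) : Prop :=
  Is1ConvexLP S P ∧
    ∀ (X : Ω → ℝ) (B : Set Ω), (X, B) ∈ S →
      ((fun _ => (0 : ℝ)), B) ∈ S ∧ P ((fun _ => (0 : ℝ)), B) = 0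

/-- Williams-coherent conditional lower prevision on `S`. -/
def IsWCoherent {Ω : Type*} (S : Set ((Ω → ℝ) × Set Ω)) (P : (Ω → ℝ) × Set Ω → ℝ) : Prop :=
  ∀ (n : ℕ) (X0 : Ω → ℝ) (B0 : Set Ω) (X : Fin n → Ω → ℝ) (Bs : Fin n → Set Ω)
    (s0 : ℝ) (s : Fin n → ℝ),
    (X0, B0) ∈ S → (∀ i, (X i, Bs i) ∈ S) → 0 ≤ s0 → (∀ i, 0 ≤ s i) →
    0 ≤ sSup ((fun ω => (∑ i, s i * gainTerm P (X i) (Bs i) ω) - s0 * gainTerm P X0 B0 ω)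
        '' (B0 ∪ ⋃ i, Bs i))

/-- de Finetti-coherent conditional prevision on `S`. -/
def IsdFCoherent {Ω : Type*} (S : Set ((Ω → ℝ) × Set Ω)) (P : (Ω → ℝ) × Set Ω → ℝ) : Prop :=
  ∀ (n : ℕ), 1 ≤ n → ∀ (X : Fin n → Ω → ℝ) (Bs : Fin n → Set Ω) (s : Fin n → ℝ),
    (∀ i, (X i, Bs i) ∈ S) →
    0 ≤ sSup ((fun ω => ∑ i, s i * gainTerm P (X i) (Bs i) ω) '' (⋃ i, Bs i))

/-- Goodman–Nguyen relation on conditional events: `A|B ≤GN C|D`. -/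
def GNe {Ω : Type*} (A B C D : Set Ω) : Prop :=
  A ∩ B ⊆ C ∩ D ∧ Cᶜ ∩ D ⊆ Aᶜ ∩ B

/-- Goodman–Nguyen relation on conditional gambles: `X|B ≤GN Y|D`. -/
def GNg {Ω : Type*} (X : Ω → ℝ) (B : Set Ω) (Y : Ω → ℝ) (D : Set Ω) : Prop :=
  ∀ ω : Ω, ind B ω * X ω + ind (Bᶜ ∩ D) ω * sSup (X '' B)
    ≤ ind D ω * Y ω + ind (B ∩ Dᶜ) ω * sInf (Y '' D)

/-- `pt` is a partition of `Ω`. -/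
def IsPartition {Ω : Type*} (pt : Set (Set Ω)) : Prop :=
  (∀ e ∈ pt, e.Nonempty) ∧ (∀ e ∈ pt, ∀ f ∈ pt, e ≠ f → e ∩ f = ∅) ∧ ⋃₀ pt = Set.univ

/-- `E` is logically dependent on the partition `pt` (a union of its atoms). -/
def memA {Ω : Type*} (pt : Set (Set Ω)) (E : Set Ω) : Prop := ∃ T ⊆ pt, E = ⋃₀ T

/-- Inner event `E_*` w.r.t. partition `pt`. -/
def innerE {Ω : Type*} (pt : Set (Set Ω)) (E : Set Ω) : Set Ω := ⋃₀ {e ∈ pt | e ⊆ E}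

/-- Outer event `E^*` w.r.t. partition `pt`. -/
def outerE {Ω : Type*} (pt : Set (Set Ω)) (E : Set Ω) : Set Ω := ⋃₀ {e ∈ pt | (e ∩ E).Nonempty}

/-- `𝒜_C(pt)`, as a set of conditional (indicator) gambles. -/
def AC {Ω : Type*} (pt : Set (Set Ω)) : Set ((Ω → ℝ) × Set Ω) :=
  {p | ∃ A B : Set Ω, memA pt A ∧ memA pt B ∧ B.Nonempty ∧ p = (ind A, B)}

/-- The inner conditional event `(C|D)_*`, as a conditional indicator gamble. -/
noncomputable def innerCE {Ω : Type*} (pt : Set (Set Ω)) (C D : Set Ω) : (Ω → ℝ) × Set Ω :=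
  (ind (innerE pt (C ∩ D)), innerE pt (C ∩ D) ∪ outerE pt (Cᶜ ∩ D))

/-- The outer conditional event `(C|D)^*`, as a conditional indicator gamble. -/
noncomputable def outerCE {Ω : Type*} (pt : Set (Set Ω)) (C D : Set Ω) : (Ω → ℝ) × Set Ω :=
  (ind (outerE pt (C ∩ D)), outerE pt (C ∩ D) ∪ innerE pt (Cᶜ ∩ D))

lemma atoms_eq {Ω : Type*} {pt : Set (Set Ω)} (hpt : IsPartition pt)
    {e f : Set Ω} (he : e ∈ pt) (hf : f ∈ pt) (h : (e ∩ f).Nonempty) : e = f := by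
  by_contra hne
  rw [hpt.2.1 e he f hf hne] at h
  exact h.ne_empty rfl

lemma exists_atom {Ω : Type*} {pt : Set (Set Ω)} (hpt : IsPartition pt) (ω : Ω) :
    ∃ e ∈ pt, ω ∈ e := by
  have : ω ∈ ⋃₀ pt := by rw [hpt.2.2]; trivial
  exact this

lemma memA_atom_subset {Ω : Type*} {pt : Set (Set Ω)} (hpt : IsPartition pt)
    {E : Set Ω} (hE : memA pt E) {e : Set Ω} (he : e ∈ pt) (h : (e ∩ E).Nonempty) :
    e ⊆ E := by
  obtain ⟨T, hT, rfl⟩ := hE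
  obtain ⟨x, hxe, hxE⟩ := h
  obtain ⟨f, hfT, hxf⟩ := hxE
  have : e = f := atoms_eq hpt he (hT hfT) ⟨x, hxe, hxf⟩
  subst this
  exact fun y hy => ⟨e, hfT, hy⟩

/-- The outer conditional event `(C|D)^*` is a well-defined element of
`𝒜_C(pt)`, satisfies `C|D ≤GN (C|D)^*`, and is the minimum of
`M(C|D) = {A|B ∈ 𝒜_C(pt) : C|D ≤GN A|B}` w.r.t. `≤GN`. -/
theorem stmt_5 {Ω : Type*} [Nonempty Ω] (pt : Set (Set Ω)) (hpt : IsPartition pt)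
    (C D : Set Ω) (h1 : (C ∩ D).Nonempty) (h2 : (Cᶜ ∩ D).Nonempty) :
    (outerE pt (C ∩ D) ∪ innerE pt (Cᶜ ∩ D)).Nonempty ∧
    memA pt (outerE pt (C ∩ D)) ∧
    memA pt (outerE pt (C ∩ D) ∪ innerE pt (Cᶜ ∩ D)) ∧
    GNe C D (outerE pt (C ∩ D)) (outerE pt (C ∩ D) ∪ innerE pt (Cᶜ ∩ D)) ∧
    (∀ A B : Set Ω, memA pt A → memA pt B → B.Nonempty → GNe C D A B →
      GNe (outerE pt (C ∩ D)) (outerE pt (C ∩ D) ∪ innerE pt (Cᶜ ∩ D)) A B) := by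
  -- abbreviations
  have hO : memA pt (outerE pt (C ∩ D)) :=
    ⟨{e ∈ pt | (e ∩ (C ∩ D)).Nonempty}, fun e he => he.1, rfl⟩
  have hI : memA pt (innerE pt (Cᶜ ∩ D)) :=
    ⟨{e ∈ pt | e ⊆ Cᶜ ∩ D}, fun e he => he.1, rfl⟩
  have hCDsubO : C ∩ D ⊆ outerE pt (C ∩ D) := by
    intro ω hω
    obtain ⟨e, he, hωe⟩ := exists_atom hpt ω
    exact ⟨e, ⟨he, ⟨ω, hωe, hω⟩⟩, hωe⟩
  have hIsub : innerE pt (Cᶜ ∩ D) ⊆ Cᶜ ∩ D := by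
    rintro ω ⟨e, ⟨he, hsub⟩, hωe⟩
    exact hsub hωe
  refine ⟨?_, hO, ?_, ⟨?_, ?_⟩, ?_⟩
  · obtain ⟨ω, hω⟩ := h1
    exact ⟨ω, Or.inl (hCDsubO hω)⟩
  · obtain ⟨T1, hT1, hE1⟩ := hO
    obtain ⟨T2, hT2, hE2⟩ := hI
    exact ⟨T1 ∪ T2, union_subset hT1 hT2, by rw [hE1, hE2, sUnion_union]⟩
  · intro ω hω
    exact ⟨hCDsubO hω, Or.inl (hCDsubO hω)⟩
  · rintro ω ⟨hωc, hω⟩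
    rcases hω with hω | hω
    · exact absurd hω hωc
    · exact hIsub hω
  · rintro A B hA hB hBne ⟨hGN1, hGN2⟩
    have hAB : ∀ ω ∈ outerE pt (C ∩ D), ω ∈ A ∩ B := by
      rintro ω ⟨e, ⟨he, ⟨x, hxe, hxCD⟩⟩, hωe⟩
      have hx : x ∈ A ∩ B := hGN1 hxCD
      exact ⟨memA_atom_subset hpt hA he ⟨x, hxe, hx.1⟩ hωe,
             memA_atom_subset hpt hB he ⟨x, hxe, hx.2⟩ hωe⟩
    constructor
    · intro ω hω
      exact hAB ω hω.1
    · rintro ω ⟨hωA, hωB⟩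
      obtain ⟨e, he, hωe⟩ := exists_atom hpt ω
      have heB : e ⊆ B := memA_atom_subset hpt hB he ⟨ω, hωe, hωB⟩
      have heA : e ⊆ Aᶜ := by
        intro y hy
        intro hyA
        exact hωA (memA_atom_subset hpt hA he ⟨y, hy, hyA⟩ hωe)
      have heCD : e ⊆ Cᶜ ∩ D := fun y hy => hGN2 ⟨heA hy, heB hy⟩
      refine ⟨?_, Or.inr ⟨e, ⟨he, heCD⟩, hωe⟩⟩
      rintro ⟨f, ⟨hf, ⟨x, hxf, hxCD⟩⟩, hωf⟩
      have : e = f := atoms_eq hpt he hf ⟨ω, hωe, hωf⟩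
      subst this
      exact (heCD hxf).1 hxCD.1
end

section
/- Let 𝒫 be a partition of Ω and let μ̲ be a W-coherent lower probability on 𝒜_C(𝒫). Let C|D be a conditional event with C ∩ D ≠ ∅ and Cᶜ ∩ D ≠ ∅. Then a map ν on 𝒜_C(𝒫) ∪ {C|D} that agrees with μ̲ on 𝒜_C(𝒫) is a W-coherent lower probability if and only if μ̲((C|D)_*) ≤ ν(C|D) ≤ μ̲((C|D)^*). -/
open Set

/-!
Necessity: a W-coherent lower probability is monotone for the Goodman–Nguyen order, and
`(C|D)_* ≤GN C|D ≤GN (C|D)^*`.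

Sufficiency: in a betting combination on `𝒜_C(𝒫) ∪ {C|D}`, let `t` be the net stake on `C|D`.
Replace `C|D` by `(C|D)^*` if `t ≥ 0` and by `(C|D)_*` if `t < 0`; the result is a combination
on `𝒜_C(𝒫)`, whose gain has nonnegative supremum by coherence of `μ̲`. All other terms are constant
on atoms, and the bounds on `ν(C|D)` let each point of an atom be matched with a point of the same
atom at which the original gain is at least the new one, so the original supremum is nonnegative.
-/

section

open scoped Classical

variable {Ω : Type*} {pt : Set (Set Ω)}

section Partition

theorem IsPartition.exists_mem (hpt : IsPartition pt) (ω : Ω) : ∃ e ∈ pt, ω ∈ e := by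
  simpa [← mem_sUnion] using hpt.2.2.symm ▸ mem_univ ω

theorem IsPartition.eq_of_mem (hpt : IsPartition pt) {e f : Set Ω} (he : e ∈ pt) (hf : f ∈ pt)
    {ω : Ω} (hωe : ω ∈ e) (hωf : ω ∈ f) : e = f := by
  by_contra hef
  simpa [hpt.2.1 e he f hf hef] using mem_inter hωe hωf

theorem memA.mem_iff (hpt : IsPartition pt) {E : Set Ω} (hE : memA pt E) {e : Set Ω}
    (he : e ∈ pt) {ω ω' : Ω} (hω : ω ∈ e) (hω' : ω' ∈ e) : ω ∈ E ↔ ω' ∈ E := by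
  obtain ⟨T, hT, rfl⟩ := hE
  suffices ∀ {a b}, a ∈ e → b ∈ e → a ∈ ⋃₀ T → b ∈ ⋃₀ T from ⟨this hω hω', this hω' hω⟩
  rintro a b ha hb ⟨f, hfT, haf⟩
  exact ⟨f, hfT, hpt.eq_of_mem he (hT hfT) ha haf ▸ hb⟩

theorem IsPartition.mem_outerE_iff (hpt : IsPartition pt) {e : Set Ω} (he : e ∈ pt) {ω : Ω}
    (hω : ω ∈ e) (E : Set Ω) : ω ∈ outerE pt E ↔ (e ∩ E).Nonempty :=
  ⟨fun ⟨_, ⟨hf, hfE⟩, hωf⟩ => hpt.eq_of_mem he hf hω hωf ▸ hfE, fun h => ⟨e, ⟨he, h⟩, hω⟩⟩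

theorem IsPartition.mem_innerE_iff (hpt : IsPartition pt) {e : Set Ω} (he : e ∈ pt) {ω : Ω}
    (hω : ω ∈ e) (E : Set Ω) : ω ∈ innerE pt E ↔ e ⊆ E :=
  ⟨fun ⟨_, ⟨hf, hfE⟩, hωf⟩ => hpt.eq_of_mem he hf hω hωf ▸ hfE, fun h => ⟨e, ⟨he, h⟩, hω⟩⟩

theorem IsPartition.subset_outerE (hpt : IsPartition pt) (E : Set Ω) : E ⊆ outerE pt E := by
  intro ω hω
  obtain ⟨e, he, hωe⟩ := hpt.exists_mem ω
  exact ⟨e, ⟨he, ω, hωe, hω⟩, hωe⟩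

theorem innerE_subset (pt : Set (Set Ω)) (E : Set Ω) : innerE pt E ⊆ E :=
  fun _ ⟨_, ⟨_, hfE⟩, hωf⟩ => hfE hωf

theorem memA_innerE (pt : Set (Set Ω)) (E : Set Ω) : memA pt (innerE pt E) :=
  ⟨_, fun _ hf => hf.1, rfl⟩

theorem memA_outerE (pt : Set (Set Ω)) (E : Set Ω) : memA pt (outerE pt E) :=
  ⟨_, fun _ hf => hf.1, rfl⟩

theorem memA.union {A B : Set Ω} (hA : memA pt A) (hB : memA pt B) : memA pt (A ∪ B) := by
  obtain ⟨T, hT, rfl⟩ := hA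
  obtain ⟨T', hT', rfl⟩ := hB
  exact ⟨T ∪ T', union_subset hT hT', (sUnion_union T T').symm⟩

theorem nonempty_of_mem_AC {p : (Ω → ℝ) × Set Ω} (hp : p ∈ AC pt) : p.2.Nonempty := by
  obtain ⟨A, B, -, -, hB, rfl⟩ := hp
  exact hB

theorem innerCE_mem_AC (hpt : IsPartition pt) {C D : Set Ω} (h : (Cᶜ ∩ D).Nonempty) :
    innerCE pt C D ∈ AC pt :=
  ⟨_, _, memA_innerE pt _, (memA_innerE pt _).union (memA_outerE pt _),
    (h.mono (hpt.subset_outerE _)).mono subset_union_right, rfl⟩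

theorem outerCE_mem_AC (hpt : IsPartition pt) {C D : Set Ω} (h : (C ∩ D).Nonempty) :
    outerCE pt C D ∈ AC pt :=
  ⟨_, _, memA_outerE pt _, (memA_outerE pt _).union (memA_innerE pt _),
    (h.mono (hpt.subset_outerE _)).mono subset_union_left, rfl⟩

theorem gNe_innerCE (hpt : IsPartition pt) (C D : Set Ω) :
    GNe (innerE pt (C ∩ D)) (innerE pt (C ∩ D) ∪ outerE pt (Cᶜ ∩ D)) C D :=
  ⟨fun _ hω => innerE_subset pt _ hω.1,
    fun _ hω => ⟨fun h => hω.1 (innerE_subset pt _ h).1, Or.inr (hpt.subset_outerE _ hω)⟩⟩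

theorem gNe_outerCE (hpt : IsPartition pt) (C D : Set Ω) :
    GNe C D (outerE pt (C ∩ D)) (outerE pt (C ∩ D) ∪ innerE pt (Cᶜ ∩ D)) :=
  ⟨fun _ hω => ⟨hpt.subset_outerE _ hω, Or.inl (hpt.subset_outerE _ hω)⟩,
    fun _ hω => innerE_subset pt _ (hω.2.resolve_left hω.1)⟩

end Partition

section Gain

theorem ind_apply (A : Set Ω) (ω : Ω) : ind A ω = if ω ∈ A then 1 else 0 := by
  simp [ind, indicator_apply]

theorem gainTerm_apply (P : (Ω → ℝ) × Set Ω → ℝ) (X : Ω → ℝ) (B : Set Ω) (ω : Ω) :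
    gainTerm P X B ω = if ω ∈ B then X ω - P (X, B) else 0 := by
  simp [gainTerm, indicator_apply]

theorem abs_gainTerm_ind_le (P : (Ω → ℝ) × Set Ω → ℝ) (A B : Set Ω) (ω : Ω) :
    |gainTerm P (ind A) B ω| ≤ 1 + |P (ind A, B)| := by
  rw [gainTerm_apply, ind_apply]
  split_ifs
  · simpa using abs_sub (1 : ℝ) (P (ind A, B))
  · simp
  · rw [abs_zero]; positivity

theorem gainTerm_eq_of_mem_atom (hpt : IsPartition pt) (P : (Ω → ℝ) × Set Ω → ℝ)
    {p : (Ω → ℝ) × Set Ω} (hp : p ∈ AC pt) {e : Set Ω} (he : e ∈ pt) {ω ω' : Ω}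
    (hω : ω ∈ e) (hω' : ω' ∈ e) : gainTerm P p.1 p.2 ω = gainTerm P p.1 p.2 ω' := by
  obtain ⟨A, B, hA, hB, -, rfl⟩ := hp
  simp only [gainTerm_apply, ind_apply, hA.mem_iff hpt he hω hω', hB.mem_iff hpt he hω hω']

theorem bddAbove_image_gain (P : (Ω → ℝ) × Set Ω → ℝ) {n : ℕ} {X0 : Ω → ℝ} {B0 : Set Ω}
    {X : Fin n → Ω → ℝ} {Bs : Fin n → Set Ω} (s0 : ℝ) (s : Fin n → ℝ)
    (hX0 : ∃ A, X0 = ind A) (hX : ∀ i, ∃ A, X i = ind A) (U : Set Ω) :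
    BddAbove
      ((fun ω => (∑ i, s i * gainTerm P (X i) (Bs i) ω) - s0 * gainTerm P X0 B0 ω) '' U) := by
  choose A hA using hX
  obtain ⟨A0, rfl⟩ := hX0
  have hbound : ∀ (t : ℝ) (A B : Set Ω) (ω : Ω),
      |t * gainTerm P (ind A) B ω| ≤ |t| * (1 + |P (ind A, B)|) := fun t A B ω => by
    rw [abs_mul]
    exact mul_le_mul_of_nonneg_left (abs_gainTerm_ind_le P A B ω) (abs_nonneg t)
  refine ⟨(∑ i, |s i| * (1 + |P (X i, Bs i)|)) + |s0| * (1 + |P (ind A0, B0)|), ?_⟩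
  rintro _ ⟨ω, -, rfl⟩
  have hsum := Finset.sum_le_sum fun i (_ : i ∈ Finset.univ) =>
    (le_abs_self _).trans (hA i ▸ hbound (s i) (A i) (Bs i) ω)
  have h0 := neg_le_of_abs_le (hbound s0 A0 B0 ω)
  simp only [hA] at hsum ⊢
  linarith

end Gain

section Coherence

theorem nonneg_of_sSup_image_nonneg {f : Ω → ℝ} {U : Set Ω} {m : ℝ} (hU : U.Nonempty)
    (hf : ∀ ω ∈ U, f ω ≤ m) (h : 0 ≤ sSup (f '' U)) : 0 ≤ m :=
  h.trans (csSup_le (hU.image f) (forall_mem_image.2 hf))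

variable {S : Set ((Ω → ℝ) × Set Ω)} {P : (Ω → ℝ) × Set Ω → ℝ}

theorem IsWCoherent.nonneg (h : IsWCoherent S P) {A B : Set Ω} (hAB : (ind A, B) ∈ S)
    (hB : B.Nonempty) : 0 ≤ P (ind A, B) := by
  have hc := h 0 (ind A) B (fun i => i.elim0) (fun i => i.elim0) 1 (fun i => i.elim0) hAB
    (fun i => i.elim0) zero_le_one (fun i => i.elim0)
  simp only [Finset.univ_eq_empty, Finset.sum_empty, iUnion_of_empty, union_empty,
    zero_sub, one_mul] at hc
  refine nonneg_of_sSup_image_nonneg hB (fun ω hω => ?_) hc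
  rw [gainTerm_apply, if_pos hω, ind_apply]
  split_ifs <;> linarith

theorem IsWCoherent.le_one (h : IsWCoherent S P) {A B : Set Ω} (hAB : (ind A, B) ∈ S)
    (hB : B.Nonempty) : P (ind A, B) ≤ 1 := by
  have hc := h 1 (ind A) B (fun _ => ind A) (fun _ => B) 0 (fun _ => 1) hAB (fun _ => hAB) le_rfl
    (fun _ => zero_le_one)
  simp only [Fin.sum_univ_one, iUnion_const, union_self, one_mul, zero_mul,
    sub_zero] at hc
  refine sub_nonneg.1 (nonneg_of_sSup_image_nonneg hB (fun ω hω => ?_) hc)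
  rw [gainTerm_apply, if_pos hω, ind_apply]
  split_ifs <;> linarith

theorem IsWCoherent.le_of_gNe (h : IsWCoherent S P) {A B C D : Set Ω} (hAB : (ind A, B) ∈ S)
    (hCD : (ind C, D) ∈ S) (hB : B.Nonempty) (hD : D.Nonempty) (hGN : GNe A B C D) :
    P (ind A, B) ≤ P (ind C, D) := by
  have hc := h 1 (ind C) D (fun _ => ind A) (fun _ => B) 1 (fun _ => 1) hCD (fun _ => hAB)
    zero_le_one (fun _ => zero_le_one)
  simp only [Fin.sum_univ_one, iUnion_const, one_mul] at hc
  have h0 := h.nonneg hCD hD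
  have h1 := h.le_one hAB hB
  refine sub_nonneg.1 (nonneg_of_sSup_image_nonneg (hB.mono subset_union_right)
    (fun ω hω => ?_) hc)
  obtain ⟨hACD, hCB⟩ := hGN
  have hC : -P (ind C, D) ≤ gainTerm P (ind C) D ω := by
    rw [gainTerm_apply, ind_apply]
    split_ifs <;> linarith
  by_cases hωB : ω ∈ B
  · by_cases hωA : ω ∈ A
    · obtain ⟨hωC, hωD⟩ := hACD ⟨hωA, hωB⟩
      simp [gainTerm_apply, ind_apply, hωA, hωB, hωC, hωD]
    · simp only [gainTerm_apply P (ind A) B, ind_apply A, hωA, hωB, if_true, if_false]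
      linarith
  · have hωD : ω ∈ D := hω.resolve_right hωB
    have hωC : ω ∈ C := by_contra fun hωC => hωB (hCB ⟨hωC, hωD⟩).2
    simp only [gainTerm_apply, ind_apply, hωB, hωC, hωD, if_true, if_false]
    linarith

end Coherence

section Sandwich

variable {P Q : (Ω → ℝ) × Set Ω → ℝ} {C D e : Set Ω} {ω' : Ω}

theorem exists_gainTerm_outerCE_le (hpt : IsPartition pt)
    (h : Q (ind C, D) ≤ P (outerCE pt C D)) (he : e ∈ pt) (hω' : ω' ∈ e) :
    ∃ ω ∈ e, (ω' ∈ (outerCE pt C D).2 → ω ∈ D) ∧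
      gainTerm P (outerCE pt C D).1 (outerCE pt C D).2 ω' ≤ gainTerm Q (ind C) D ω := by
  simp only [outerCE] at h ⊢
  simp only [gainTerm_apply, ind_apply, mem_union, hpt.mem_outerE_iff he hω',
    hpt.mem_innerE_iff he hω']
  by_cases hCD : (e ∩ (C ∩ D)).Nonempty
  · obtain ⟨ω, hωe, hωC, hωD⟩ := hCD
    refine ⟨ω, hωe, fun _ => hωD, ?_⟩
    simp only [hωC, hωD, if_true, true_or, show (e ∩ (C ∩ D)).Nonempty from ⟨ω, hωe, hωC, hωD⟩]
    linarith
  by_cases hCcD : e ⊆ Cᶜ ∩ D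
  · obtain ⟨hωC, hωD⟩ := hCcD hω'
    refine ⟨ω', hω', fun _ => hωD, ?_⟩
    simp only [hCD, hCcD, show ω' ∉ C from hωC, hωD, if_true, if_false, or_true]
    linarith
  obtain ⟨ω, hωe, hωD⟩ := not_subset.1 fun heD =>
    hCcD fun x hx => ⟨fun hxC => hCD ⟨x, hx, hxC, heD hx⟩, heD hx⟩
  exact ⟨ω, hωe, by simp [hCD, hCcD], by simp [hCD, hCcD, hωD]⟩

theorem exists_le_gainTerm_innerCE (hpt : IsPartition pt)
    (h : P (innerCE pt C D) ≤ Q (ind C, D)) (he : e ∈ pt) (hω' : ω' ∈ e) :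
    ∃ ω ∈ e, (ω' ∈ (innerCE pt C D).2 → ω ∈ D) ∧
      gainTerm Q (ind C) D ω ≤ gainTerm P (innerCE pt C D).1 (innerCE pt C D).2 ω' := by
  simp only [innerCE] at h ⊢
  simp only [gainTerm_apply, ind_apply, mem_union, hpt.mem_outerE_iff he hω',
    hpt.mem_innerE_iff he hω']
  by_cases hCD : e ⊆ C ∩ D
  · obtain ⟨hωC, hωD⟩ := hCD hω'
    refine ⟨ω', hω', fun _ => hωD, ?_⟩
    simp only [hCD, hωC, hωD, if_true, true_or]
    linarith
  by_cases hCcD : (e ∩ (Cᶜ ∩ D)).Nonempty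
  · obtain ⟨ω, hωe, hωC, hωD⟩ := hCcD
    refine ⟨ω, hωe, fun _ => hωD, ?_⟩
    simp only [hCD, show ω ∉ C from hωC, hωD, if_true, if_false, or_true,
      show (e ∩ (Cᶜ ∩ D)).Nonempty from ⟨ω, hωe, hωC, hωD⟩]
    linarith
  obtain ⟨ω, hωe, hωD⟩ := not_subset.1 fun heD =>
    hCD fun x hx => ⟨by_contra fun hxC => hCcD ⟨x, hx, hxC, heD hx⟩, heD hx⟩
  exact ⟨ω, hωe, by simp [hCD, hCcD], by simp [hCD, hCcD, hωD]⟩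

end Sandwich

section Replacement

variable {μ ν : (Ω → ℝ) × Set Ω → ℝ} {q q' p : (Ω → ℝ) × Set Ω} {e : Set Ω} {ω ω' : Ω}

theorem mem_of_mem_replace (hpt : IsPartition pt) (hp : p ∈ AC pt ∪ {q}) (he : e ∈ pt)
    (hω : ω ∈ e) (hω' : ω' ∈ e) (hq : ω' ∈ q'.2 → ω ∈ q.2)
    (h : ω' ∈ (if p = q then q' else p).2) : ω ∈ p.2 := by
  split_ifs at h with hpq
  · exact hpq ▸ hq h
  · obtain ⟨A, B, -, hB, -, rfl⟩ := hp.resolve_right hpq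
    exact (hB.mem_iff hpt he hω hω').2 h

theorem gainTerm_replace (hpt : IsPartition pt) (hag : ∀ p ∈ AC pt, ν p = μ p)
    (hp : p ∈ AC pt ∪ {q}) (he : e ∈ pt) (hω : ω ∈ e) (hω' : ω' ∈ e) :
    gainTerm μ (if p = q then q' else p).1 (if p = q then q' else p).2 ω' =
      gainTerm ν p.1 p.2 ω +
        if p = q then gainTerm μ q'.1 q'.2 ω' - gainTerm ν q.1 q.2 ω else 0 := by
  split_ifs with hpq
  · subst hpq
    ring
  · have hpAC := hp.resolve_right hpq
    rw [add_zero, gainTerm_eq_of_mem_atom hpt ν hpAC he hω hω']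
    simp only [gainTerm, Prod.mk.eta, hag p hpAC]

/-- The first factor in `hcouple` is the net stake on `q` of the combination. -/
theorem sSup_gain_nonneg_of_replace (hpt : IsPartition pt) (hμ : IsWCoherent (AC pt) μ)
    (hag : ∀ p ∈ AC pt, ν p = μ p) (hq : ∃ A, q.1 = ind A) (hq' : q' ∈ AC pt) {n : ℕ}
    {X0 : Ω → ℝ} {B0 : Set Ω} {X : Fin n → Ω → ℝ} {Bs : Fin n → Set Ω} {s0 : ℝ} {s : Fin n → ℝ}
    (hX0 : (X0, B0) ∈ AC pt ∪ {q}) (hX : ∀ i, (X i, Bs i) ∈ AC pt ∪ {q}) (hs0 : 0 ≤ s0)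
    (hs : ∀ i, 0 ≤ s i)
    (hcouple : ∀ e ∈ pt, ∀ ω' ∈ e, ∃ ω ∈ e, (ω' ∈ q'.2 → ω ∈ q.2) ∧
      ((∑ i, if (X i, Bs i) = q then s i else 0) - if (X0, B0) = q then s0 else 0) *
        (gainTerm μ q'.1 q'.2 ω' - gainTerm ν q.1 q.2 ω) ≤ 0) :
    0 ≤ sSup ((fun ω => (∑ i, s i * gainTerm ν (X i) (Bs i) ω) - s0 * gainTerm ν X0 B0 ω) ''
      (B0 ∪ ⋃ i, Bs i)) := by
  set σ : (Ω → ℝ) × Set Ω → (Ω → ℝ) × Set Ω := fun p => if p = q then q' else p with hσ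
  have hσAC : ∀ p ∈ AC pt ∪ {q}, σ p ∈ AC pt := fun p hp => by
    simp only [hσ]
    split_ifs with hpq
    exacts [hq', hp.resolve_right hpq]
  have hind : ∀ p ∈ AC pt ∪ {q}, ∃ A, p.1 = ind A := by
    rintro p (⟨A, B, -, -, -, rfl⟩ | rfl)
    exacts [⟨A, rfl⟩, hq]
  have hco := hμ n (σ (X0, B0)).1 (σ (X0, B0)).2 (fun i => (σ (X i, Bs i)).1)
    (fun i => (σ (X i, Bs i)).2) s0 s (hσAC _ hX0) (fun i => hσAC _ (hX i)) hs0 hs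
  refine hco.trans (csSup_le ?_ (forall_mem_image.2 fun ω' hω' => ?_))
  · exact ((nonempty_of_mem_AC (hσAC _ hX0)).mono subset_union_left).image _
  obtain ⟨e, he, hω'e⟩ := hpt.exists_mem ω'
  obtain ⟨ω, hωe, hqω, ht⟩ := hcouple e he ω' hω'e
  have hωE : ω ∈ B0 ∪ ⋃ i, Bs i := by
    rcases hω' with h0 | hi
    · exact Or.inl (mem_of_mem_replace hpt hX0 he hωe hω'e hqω h0)
    · obtain ⟨i, hi⟩ := mem_iUnion.1 hi
      exact Or.inr (mem_iUnion.2 ⟨i, mem_of_mem_replace hpt (hX i) he hωe hω'e hqω hi⟩)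
  refine le_trans ?_ (le_csSup (bddAbove_image_gain ν s0 s (hind _ hX0)
    (fun i => hind _ (hX i)) _) ⟨ω, hωE, rfl⟩)
  simp only [hσ, gainTerm_replace hpt hag (hX _) he hωe hω'e,
    gainTerm_replace hpt hag hX0 he hωe hω'e]
  simp only [sub_mul, Finset.sum_mul, ite_mul, zero_mul] at ht
  simp only [mul_add, Finset.sum_add_distrib, mul_ite, mul_zero]
  linarith

theorem isWCoherent_union_singleton_of_sandwich (hpt : IsPartition pt)
    (hμ : IsWCoherent (AC pt) μ) (hag : ∀ p ∈ AC pt, ν p = μ p) (hq : ∃ A, q.1 = ind A)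
    {qlo qhi : (Ω → ℝ) × Set Ω} (hlo : qlo ∈ AC pt) (hhi : qhi ∈ AC pt)
    (hle_lo : ∀ e ∈ pt, ∀ ω' ∈ e, ∃ ω ∈ e, (ω' ∈ qlo.2 → ω ∈ q.2) ∧
      gainTerm ν q.1 q.2 ω ≤ gainTerm μ qlo.1 qlo.2 ω')
    (hhi_le : ∀ e ∈ pt, ∀ ω' ∈ e, ∃ ω ∈ e, (ω' ∈ qhi.2 → ω ∈ q.2) ∧
      gainTerm μ qhi.1 qhi.2 ω' ≤ gainTerm ν q.1 q.2 ω) :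
    IsWCoherent (AC pt ∪ {q}) ν := by
  intro n X0 B0 X Bs s0 s hX0 hX hs0 hs
  rcases le_or_gt 0 ((∑ i, if (X i, Bs i) = q then s i else 0) - if (X0, B0) = q then s0 else 0)
    with ht | ht
  · refine sSup_gain_nonneg_of_replace hpt hμ hag hq hhi hX0 hX hs0 hs fun e he ω' hω' => ?_
    obtain ⟨ω, hωe, hqω, hle⟩ := hhi_le e he ω' hω'
    exact ⟨ω, hωe, hqω, mul_nonpos_of_nonneg_of_nonpos ht (sub_nonpos.2 hle)⟩
  · refine sSup_gain_nonneg_of_replace hpt hμ hag hq hlo hX0 hX hs0 hs fun e he ω' hω' => ?_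
    obtain ⟨ω, hωe, hqω, hle⟩ := hle_lo e he ω' hω'
    exact ⟨ω, hωe, hqω, mul_nonpos_of_nonpos_of_nonneg ht.le (sub_nonneg.2 hle)⟩

end Replacement

end

theorem stmt_7_general {Ω : Type*} (pt : Set (Set Ω)) (hpt : IsPartition pt)
    (μ ν : (Ω → ℝ) × Set Ω → ℝ)
    (hμ : IsWCoherent (AC pt) μ)
    (C D : Set Ω) (h1 : (C ∩ D).Nonempty) (h2 : (Cᶜ ∩ D).Nonempty)
    (hag : ∀ p ∈ AC pt, ν p = μ p) :
    IsWCoherent (AC pt ∪ {(ind C, D)}) ν ↔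
      (μ (innerCE pt C D) ≤ ν (ind C, D) ∧ ν (ind C, D) ≤ μ (outerCE pt C D)) := by
  have hin := innerCE_mem_AC hpt h2
  have hout := outerCE_mem_AC hpt h1
  constructor
  · intro hν
    have hCD : (ind C, D) ∈ AC pt ∪ {(ind C, D)} := Or.inr rfl
    have hD : D.Nonempty := h1.mono inter_subset_right
    rw [← hag _ hin, ← hag _ hout]
    exact ⟨hν.le_of_gNe (Or.inl hin) hCD (nonempty_of_mem_AC hin) hD (gNe_innerCE hpt C D),
      hν.le_of_gNe hCD (Or.inl hout) hD (nonempty_of_mem_AC hout) (gNe_outerCE hpt C D)⟩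
  · rintro ⟨hlo, hhi⟩
    exact isWCoherent_union_singleton_of_sandwich hpt hμ hag ⟨C, rfl⟩ hin hout
      (fun _ he _ hω' => exists_le_gainTerm_innerCE hpt hlo he hω')
      (fun _ he _ hω' => exists_gainTerm_outerCE_le hpt hhi he hω')

/-- A map agreeing with a W-coherent lower probability on `𝒜_C(pt)` extends
W-coherently to an additional conditional event `C|D` iff its value there lies between the
values of the inner event `(C|D)_*` and the outer event `(C|D)^*`. -/
theorem stmt_7 {Ω : Type*} [Nonempty Ω] (pt : Set (Set Ω)) (hpt : IsPartition pt)
    (μ ν : (Ω → ℝ) × Set Ω → ℝ)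
    (hμ : IsWCoherent (AC pt) μ)
    (C D : Set Ω) (h1 : (C ∩ D).Nonempty) (h2 : (Cᶜ ∩ D).Nonempty)
    (hag : ∀ p ∈ AC pt, ν p = μ p) :
    IsWCoherent (AC pt ∪ {(ind C, D)}) ν ↔
      (μ (innerCE pt C D) ≤ ν (ind C, D) ∧ ν (ind C, D) ≤ μ (outerCE pt C D)) :=
  stmt_7_general pt hpt μ ν hμ C D h1 h2 hag
end
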